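/- Let ρ be a state on Q^⊗n and let P satisfy 0 ≤ P ≤ I with operator norm ‖P‖_∞ ≤ δ. Let N_P be the number of P-outcomes when each subsystem is measured with {P, I−P}. Then for every c ≥ 0, Pr(N_P/n ≥ δ + c) ≤ ξ(n, δ, c), where ξ(n,δ,c) := Σ_{i = ⌈n(δ+c)⌉}^{n} C(n,i) δ^i (1−δ)^{n−i} is the upper tail of the Binomial(n, δ) distribution. -/

import Mathlib

open Matrix BigOperators
open scoped ComplexOrder

/-- The product POVM element on `Q^⊗n` corresponding to outcome string `s`, where each
subsystem is measured with the binary POVM `{P, I − P}` (`s i = true` means `P`-outcome). -/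
noncomputable def povmProd {d n : ℕ} (P : Matrix (Fin d) (Fin d) ℂ) (s : Fin n → Bool) :
    Matrix (Fin n → Fin d) (Fin n → Fin d) ℂ :=
  Matrix.of fun x y => ∏ i, (if s i then P else (1 : Matrix (Fin d) (Fin d) ℂ) - P) (x i) (y i)

/-- `Pr(N_P / n ≥ e)`: the probability (via Born's rule) that, measuring each of the `n`
subsystems of `ρ` with `{P, I − P}`, the number of `P`-outcomes is at least `e·n`. -/
noncomputable def tailProb {d n : ℕ} (ρ : Matrix (Fin n → Fin d) (Fin n → Fin d) ℂ)
    (P : Matrix (Fin d) (Fin d) ℂ) (e : ℝ) : ℝ :=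
  ∑ s : Fin n → Bool,
    if e * n ≤ ((Finset.univ.filter fun i => s i = true).card : ℝ)
    then ((povmProd P s * ρ).trace).re else 0

/-- The operator norm `‖·‖_∞` of a matrix, i.e. the norm of the induced linear operator
on Euclidean space. -/
noncomputable def matOpNorm {d : ℕ} (P : Matrix (Fin d) (Fin d) ℂ) : ℝ :=
  ‖LinearMap.toContinuousLinearMap (Matrix.toEuclideanLin P)‖

/-- Upper tail `ξ(n, δ, c)` of the Binomial(n, δ) distribution, summed from `⌈n(δ+c)⌉` to `n`. -/
noncomputable def binTail (n : ℕ) (δ c : ℝ) : ℝ :=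
  ∑ i ∈ (Finset.range (n + 1)).filter (fun i : ℕ => (n : ℝ) * (δ + c) ≤ (i : ℝ)),
    (n.choose i : ℝ) * δ ^ i * (1 - δ) ^ (n - i)

/-!
For an upward-closed event `U` of outcome strings, such as `{N_P ≥ e n}`, the probability
`Pr_P(U)` is monotone in `P` for the Loewner order. Raising the effect on one site from `P` to
`Q ≥ P` changes the weight of a string `s` by `± tr((A_s ⊗ (Q - P)) ρ) ≥ 0`, where `A_s` are the
effects of `s` on the other sites; the sign is `+` iff `s` has outcome `P` at that site. Strings
come in pairs differing only at that site, and whenever the `-` member of a pair lies in `U` so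
does the `+` member.

Since `0 ≤ P ≤ ‖P‖_∞ I ≤ δ I`, replacing `P` by `δ I` on every site can only increase the tail
probability, and `{δ I, (1 - δ) I}` yields i.i.d. Bernoulli(δ) outcomes whatever `ρ` is. The
comparison needs `δ I ≤ I` on each site; when there is a site, a nonempty tail event forces
`δ + c ≤ 1`, and an empty one makes both sides vanish.
-/

open Finset Function
open scoped MatrixOrder

namespace Matrix

variable {ι m n p R : Type*} [Fintype ι]

noncomputable def tensorPi [CommSemiring R] :
    MultilinearMap R (fun _ : ι => Matrix m n R) (Matrix (ι → m) (ι → n) R) :=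
  MultilinearMap.pi fun x => MultilinearMap.pi fun y =>
    (MultilinearMap.mkPiAlgebra R ι R).compLinearMap fun i => entryLinearMap R R (x i) (y i)

@[simp]
lemma tensorPi_apply [CommSemiring R] (A : ι → Matrix m n R) (x : ι → m) (y : ι → n) :
    tensorPi A x y = ∏ i, A i (x i) (y i) := rfl

lemma tensorPi_mul [CommSemiring R] [Fintype n] [DecidableEq ι] (A : ι → Matrix m n R)
    (B : ι → Matrix n p R) : tensorPi A * tensorPi B = tensorPi fun i => A i * B i := by
  ext x y
  simp only [mul_apply, tensorPi_apply, Fintype.prod_sum, prod_mul_distrib]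

lemma tensorPi_conjTranspose [CommSemiring R] [StarRing R] (A : ι → Matrix m n R) :
    (tensorPi A)ᴴ = tensorPi fun i => (A i)ᴴ := by
  ext x y
  simp [conjTranspose_apply, star_prod]

lemma tensorPi_one [CommSemiring R] [DecidableEq m] :
    tensorPi (fun _ : ι => (1 : Matrix m m R)) = 1 := by
  ext x y
  simp only [tensorPi_apply, one_apply, prod_boole, funext_iff]
  simp

lemma smul_one_le_smul_one [DecidableEq m] {a b : ℝ} (h : a ≤ b) :
    (a : ℂ) • (1 : Matrix m m ℂ) ≤ (b : ℂ) • 1 := by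
  rw [le_iff, ← sub_smul, ← Complex.ofReal_sub, Complex.coe_smul]
  exact PosSemidef.one.smul (sub_nonneg.mpr h)

variable [Fintype m] [DecidableEq m]

lemma PosSemidef.tensorPi [DecidableEq ι] {A : ι → Matrix m m ℂ} (hA : ∀ i, (A i).PosSemidef) :
    (Matrix.tensorPi A).PosSemidef := by
  choose B hB using fun i => CStarAlgebra.nonneg_iff_eq_star_mul_self.mp (hA i).nonneg
  have : Matrix.tensorPi A = (Matrix.tensorPi B)ᴴ * Matrix.tensorPi B := by
    rw [tensorPi_conjTranspose, tensorPi_mul]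
    exact congrArg _ (funext hB)
  exact this ▸ posSemidef_conjTranspose_mul_self _

lemma PosSemidef.trace_mul_nonneg {A B : Matrix m m ℂ} (hA : A.PosSemidef) (hB : B.PosSemidef) :
    0 ≤ (A * B).trace := by
  obtain ⟨C, rfl⟩ := CStarAlgebra.nonneg_iff_eq_star_mul_self.mp hA.nonneg
  rw [Matrix.mul_assoc, trace_mul_comm]
  exact (hB.mul_mul_conjTranspose_same C).trace_nonneg

open scoped Matrix.Norms.L2Operator in
lemma IsHermitian.le_smul_one_of_l2_opNorm_le {P : Matrix m m ℂ} (hP : P.IsHermitian) {δ : ℝ}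
    (hδ : ‖P‖ ≤ δ) : P ≤ (δ : ℂ) • 1 :=
  calc P ≤ algebraMap ℝ _ ‖P‖ := IsSelfAdjoint.le_algebraMap_norm_self hP
    _ = (‖P‖ : ℂ) • 1 := by rw [Algebra.algebraMap_eq_smul_one, Complex.coe_smul]
    _ ≤ (δ : ℂ) • 1 := smul_one_le_smul_one hδ

end Matrix

section BoolStrings

variable {ι : Type*} [Fintype ι] [DecidableEq ι]

lemma sum_apply_card_filter_true {M : Type*} [AddCommMonoid M] (g : ℕ → M) :
    ∑ s : ι → Bool, g #{i | s i} =
      ∑ k ∈ range (Fintype.card ι + 1), (Fintype.card ι).choose k • g k := by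
  have hbij : Bijective fun s : ι → Bool => ({i | s i} : Finset ι) := by
    refine ⟨fun s t hst => funext fun i => Bool.eq_iff_iff.mpr ?_, fun S => ⟨(· ∈ S), by simp⟩⟩
    simpa using congrArg (i ∈ ·) hst
  rw [Fintype.sum_bijective _ hbij _ (fun S => g #S) fun _ => rfl, ← powerset_univ,
    sum_powerset_apply_card, card_univ]

lemma sum_ite_neg_nonneg_of_isUpperSet {U : Finset (ι → Bool)}
    (hU : IsUpperSet (U : Set (ι → Bool))) (j : ι) {f : (ι → Bool) → ℝ} (hf₀ : ∀ s, 0 ≤ f s)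
    (hf : ∀ s b, f (update s j b) = f s) :
    0 ≤ ∑ s ∈ U, if s j then f s else -f s := by
  rw [sum_ite, sum_neg_distrib, ← sub_eq_add_neg, sub_nonneg]
  have hinj : Set.InjOn (fun s : ι → Bool => update s j true) ↑({s ∈ U | ¬ s j} : Finset _) := by
    intro s hs t ht hst
    simp only [coe_filter, Set.mem_ofPred_eq, Bool.not_eq_true] at hs ht
    rw [← update_eq_self j s, ← update_eq_self j t, hs.2, ht.2]
    simpa using congrArg (fun s : ι → Bool => update s j false) hst
  calc ∑ s ∈ U with ¬ s j, f s
      = ∑ s ∈ {s ∈ U | ¬ s j}.image (fun s : ι → Bool => update s j true), f s := by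
        rw [sum_image hinj]
        exact sum_congr rfl fun s _ => (hf s true).symm
    _ ≤ ∑ s ∈ U with s j, f s := by
      refine sum_le_sum_of_subset_of_nonneg (fun t ht => ?_) fun s _ _ => hf₀ s
      obtain ⟨s, hs, rfl⟩ := mem_image.mp ht
      simp only [mem_filter] at hs ⊢
      exact ⟨hU (le_update_iff.mpr ⟨Bool.le_true _, fun _ _ => le_rfl⟩) hs.1, by simp⟩

variable (ι) in
noncomputable def tailEvent (e : ℝ) : Finset (ι → Bool) :=
  {s | e * Fintype.card ι ≤ #{i | s i}}

lemma isUpperSet_tailEvent (e : ℝ) : IsUpperSet (tailEvent ι e : Set (ι → Bool)) := by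
  intro s t hst hs
  simp only [tailEvent, coe_filter, mem_univ, true_and, Set.mem_ofPred_eq] at hs ⊢
  refine hs.trans (Nat.cast_le.mpr (card_le_card (monotone_filter_right _ fun i => ?_)))
  exact fun _ => Bool.le_iff_imp.mp (hst i)

lemma le_one_of_mem_tailEvent [Nonempty ι] {e : ℝ} {s : ι → Bool} (hs : s ∈ tailEvent ι e) :
    e ≤ 1 := by
  simp only [tailEvent, mem_filter, mem_univ, true_and] at hs
  have hcard : (#{i | s i} : ℝ) ≤ Fintype.card ι := Nat.cast_le.mpr (card_le_univ _)
  exact le_of_mul_le_mul_right (by linarith) (Nat.cast_pos.mpr Fintype.card_pos)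

lemma sum_tailEvent_pow_mul_pow (e p : ℝ) :
    ∑ s ∈ tailEvent ι e, p ^ #{i | s i} * (1 - p) ^ (Fintype.card ι - #{i | s i}) =
      ∑ k ∈ (range (Fintype.card ι + 1)).filter fun k : ℕ => e * Fintype.card ι ≤ (k : ℝ),
        (Fintype.card ι).choose k * p ^ k * (1 - p) ^ (Fintype.card ι - k) := by
  rw [tailEvent, sum_filter, sum_filter,
    sum_apply_card_filter_true fun k => if e * Fintype.card ι ≤ k then
      p ^ k * (1 - p) ^ (Fintype.card ι - k) else 0]
  refine sum_congr rfl fun k _ => ?_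
  split_ifs <;> simp [nsmul_eq_mul, mul_assoc]

end BoolStrings

section ProductMeasurement

variable {ι m : Type*} [Fintype ι] [DecidableEq ι] [DecidableEq m]

noncomputable def outcomeEffect (P : ι → Matrix m m ℂ) (s : ι → Bool) :
    Matrix (ι → m) (ι → m) ℂ :=
  tensorPi fun i => if s i then P i else 1 - P i

lemma outcomeEffect_smul_one (p : ℝ) (s : ι → Bool) :
    outcomeEffect (fun _ => (p : ℂ) • (1 : Matrix m m ℂ)) s =
      ((p ^ #{i | s i} * (1 - p) ^ (Fintype.card ι - #{i | s i}) : ℝ) : ℂ) • 1 := by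
  have hslots : (fun i => if s i then (p : ℂ) • (1 : Matrix m m ℂ) else 1 - (p : ℂ) • 1) =
      fun i => ((if s i then p else 1 - p : ℝ) : ℂ) • 1 := by
    funext i
    split_ifs <;> simp [sub_smul]
  rw [outcomeEffect, hslots, MultilinearMap.map_smul_univ, tensorPi_one, ← Complex.ofReal_prod,
    prod_ite, prod_const, prod_const, ← card_compl, compl_filter]

lemma outcomeEffect_update_sub (P : ι → Matrix m m ℂ) (j : ι) (Q : Matrix m m ℂ)
    (s : ι → Bool) :
    outcomeEffect (update P j Q) s - outcomeEffect P s =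
      if s j then tensorPi (update (fun i => if s i then P i else 1 - P i) j (Q - P j))
      else -tensorPi (update (fun i => if s i then P i else 1 - P i) j (Q - P j)) := by
  set slots : ι → Matrix m m ℂ := fun i => if s i then P i else 1 - P i
  have hnew : outcomeEffect (update P j Q) s =
      tensorPi (update slots j (if s j then Q else 1 - Q)) := by
    refine congrArg tensorPi (funext fun i => ?_)
    rcases eq_or_ne i j with rfl | hi <;> simp [slots, *]
  have hold : outcomeEffect P s = tensorPi (update slots j (slots j)) := by
    rw [update_eq_self]
    rfl
  rw [hnew, hold, ← MultilinearMap.map_update_sub]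
  by_cases hs : s j
  · rw [if_pos hs, if_pos hs, show slots j = P j from if_pos hs]
  · rw [if_neg hs, if_neg hs, show slots j = 1 - P j from if_neg hs,
      ← MultilinearMap.map_update_neg, neg_sub, sub_sub_sub_cancel_left]

variable [Fintype m]

noncomputable def eventProb (ρ : Matrix (ι → m) (ι → m) ℂ) (P : ι → Matrix m m ℂ)
    (U : Finset (ι → Bool)) : ℝ :=
  ∑ s ∈ U, (outcomeEffect P s * ρ).trace.re

lemma eventProb_smul_one {ρ : Matrix (ι → m) (ι → m) ℂ} (hρ : ρ.trace = 1) (p : ℝ)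
    (U : Finset (ι → Bool)) :
    eventProb ρ (fun _ => (p : ℂ) • 1) U =
      ∑ s ∈ U, p ^ #{i | s i} * (1 - p) ^ (Fintype.card ι - #{i | s i}) := by
  simp only [eventProb, outcomeEffect_smul_one, smul_mul, one_mul, trace_smul, hρ, smul_eq_mul,
    mul_one, Complex.ofReal_re]

lemma eventProb_le_update {ρ : Matrix (ι → m) (ι → m) ℂ} (hρ : ρ.PosSemidef)
    {P : ι → Matrix m m ℂ} {j : ι} {Q : Matrix m m ℂ} (hP₀ : ∀ i ≠ j, 0 ≤ P i)
    (hP₁ : ∀ i ≠ j, P i ≤ 1) (hPQ : P j ≤ Q) {U : Finset (ι → Bool)}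
    (hU : IsUpperSet (U : Set (ι → Bool))) :
    eventProb ρ P U ≤ eventProb ρ (update P j Q) U := by
  let slots (s : ι → Bool) (i : ι) : Matrix m m ℂ := if s i then P i else 1 - P i
  let D (s : ι → Bool) : ℝ := (tensorPi (update (slots s) j (Q - P j)) * ρ).trace.re
  have hD₀ (s : ι → Bool) : 0 ≤ D s := by
    refine (Complex.nonneg_iff.mp ((PosSemidef.tensorPi fun i => ?_).trace_mul_nonneg hρ)).1
    rcases eq_or_ne i j with rfl | hi
    · rw [update_self]
      exact hPQ
    · rw [update_of_ne hi]
      dsimp only [slots]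
      split_ifs
      exacts [(hP₀ i hi).posSemidef, le_iff.mp (hP₁ i hi)]
  have hD (s : ι → Bool) (b : Bool) : D (update s j b) = D s := by
    have : update (slots (update s j b)) j (Q - P j) = update (slots s) j (Q - P j) := by
      funext i
      rcases eq_or_ne i j with rfl | hi <;> simp [slots, *]
    simp only [D, this]
  have hstep (s : ι → Bool) : (outcomeEffect (update P j Q) s * ρ).trace.re =
      (outcomeEffect P s * ρ).trace.re + if s j then D s else -D s := by
    rw [← sub_eq_iff_eq_add', ← Complex.sub_re, ← trace_sub, ← Matrix.sub_mul,
      outcomeEffect_update_sub]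
    split_ifs
    · rfl
    · rw [Matrix.neg_mul, trace_neg, Complex.neg_re]
  calc eventProb ρ P U ≤ eventProb ρ P U + ∑ s ∈ U, if s j then D s else -D s :=
        le_add_of_nonneg_right (sum_ite_neg_nonneg_of_isUpperSet hU j hD₀ hD)
    _ = eventProb ρ (update P j Q) U := by simp only [eventProb, ← sum_add_distrib, hstep]

lemma eventProb_mono {ρ : Matrix (ι → m) (ι → m) ℂ} (hρ : ρ.PosSemidef)
    {P Q : ι → Matrix m m ℂ} (hP : ∀ i, 0 ≤ P i) (hPQ : ∀ i, P i ≤ Q i) (hQ : ∀ i, Q i ≤ 1)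
    {U : Finset (ι → Bool)} (hU : IsUpperSet (U : Set (ι → Bool))) :
    eventProb ρ P U ≤ eventProb ρ Q U := by
  suffices ∀ S : Finset ι, eventProb ρ P U ≤ eventProb ρ (S.piecewise Q P) U by
    simpa using this univ
  intro S
  induction S using Finset.induction_on with
  | empty => simp
  | insert a S ha ih =>
    rw [piecewise_insert]
    refine ih.trans (eventProb_le_update hρ (fun i _ => ?_) (fun i _ => ?_) ?_ hU)
    · by_cases hi : i ∈ S <;> simp [hi, (hP i).trans (hPQ i), hP i]
    · by_cases hi : i ∈ S <;> simp [hi, hQ i, (hPQ i).trans (hQ i)]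
    · rw [piecewise_eq_of_notMem _ _ _ ha]
      exact hPQ a

end ProductMeasurement

lemma tailProb_eq_eventProb {d n : ℕ} (ρ : Matrix (Fin n → Fin d) (Fin n → Fin d) ℂ)
    (P : Matrix (Fin d) (Fin d) ℂ) (e : ℝ) :
    tailProb ρ P e = eventProb ρ (fun _ => P) (tailEvent (Fin n) e) := by
  rw [tailProb, eventProb, tailEvent, sum_filter, Fintype.card_fin]
  rfl

lemma binTail_eq_eventProb {d n : ℕ} {ρ : Matrix (Fin n → Fin d) (Fin n → Fin d) ℂ}
    (hρ : ρ.trace = 1) (δ c : ℝ) :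
    binTail n δ c = eventProb ρ (fun _ => (δ : ℂ) • 1) (tailEvent (Fin n) (δ + c)) := by
  rw [eventProb_smul_one hρ, sum_tailEvent_pow_mul_pow, Fintype.card_fin, binTail]
  simp only [mul_comm (n : ℝ)]

theorem tailProb_small_povm_general {d n : ℕ}
    (ρ : Matrix (Fin n → Fin d) (Fin n → Fin d) ℂ)
    (hρ : ρ.PosSemidef) (hρtr : ρ.trace = 1)
    (P : Matrix (Fin d) (Fin d) ℂ)
    (hP : P.PosSemidef)
    (δ : ℝ) (hδ : matOpNorm P ≤ δ)
    (c : ℝ) (hc : 0 ≤ c) :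
    tailProb ρ P (δ + c) ≤ binTail n δ c := by
  rw [tailProb_eq_eventProb, binTail_eq_eventProb hρtr]
  obtain hU | ⟨s, hs⟩ := (tailEvent (Fin n) (δ + c)).eq_empty_or_nonempty
  · simp [eventProb, hU]
  -- `matOpNorm P` is by definition the L2 operator norm `‖P‖` of `Matrix.Norms.L2Operator`.
  have hPδ : P ≤ (δ : ℂ) • 1 := hP.isHermitian.le_smul_one_of_l2_opNorm_le hδ
  refine eventProb_mono hρ (fun _ => hP.nonneg) (fun _ => hPδ) (fun i => ?_)
    (isUpperSet_tailEvent _)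
  have : Nonempty (Fin n) := ⟨i⟩
  have hδ₁ : δ ≤ 1 := by linarith [le_one_of_mem_tailEvent hs]
  simpa using smul_one_le_smul_one hδ₁

/-- **Small POVM measurement.** If `0 ≤ P ≤ I` with `‖P‖_∞ ≤ δ`, then for every `c ≥ 0`,
`Pr(N_P/n ≥ δ + c) ≤ ξ(n, δ, c)`. -/
theorem tailProb_small_povm {d n : ℕ}
    (ρ : Matrix (Fin n → Fin d) (Fin n → Fin d) ℂ)
    (hρ : ρ.PosSemidef) (hρtr : ρ.trace = 1)
    (P : Matrix (Fin d) (Fin d) ℂ)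
    (hP : P.PosSemidef) (hPle : ((1 : Matrix (Fin d) (Fin d) ℂ) - P).PosSemidef)
    (δ : ℝ) (hδ : matOpNorm P ≤ δ)
    (c : ℝ) (hc : 0 ≤ c) :
    tailProb ρ P (δ + c) ≤ binTail n δ c :=
  tailProb_small_povm_general ρ hρ hρtr P hP δ hδ c hc
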